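/- arXiv:2406.07253 — 3 statements merged into one kernel-verified Lean document; each statement's English description precedes it below -/
import Mathlib

section
/- Performance difference lemma (finite horizon). For any two policies π and π' in a finite-horizon MDP, the difference of values satisfies V^{π'} − V^{π} = ∑_{h=1}^{H} ∑_{s} d^{π'}_h(s) ∑_{a} π'_h(a|s) · (Q^{π}_h(s,a) − V^{π}_h(s)). -/
open Finset

/-- Occupancy measure of a (non-stationary) policy in a finite-horizon MDP:
`docc P0 Ptr π h` is `d^π_h`, with `d^π_1 = P0` and
`d^π_{h+1}(s') = ∑_{s,a} d^π_h(s) π_h(a|s) P_h(s'|s,a)`.  The value at index `0` is a dummy. -/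
noncomputable def docc {S A : Type*} [Fintype S] [Fintype A] (P0 : S → ℝ)
    (Ptr : ℕ → S → A → S → ℝ) (π : ℕ → S → A → ℝ) : ℕ → S → ℝ
  | 0 => P0
  | 1 => P0
  | h + 2 => fun s' =>
      ∑ s : S, ∑ a : A, docc P0 Ptr π (h + 1) s * π (h + 1) s a * Ptr (h + 1) s a s'

/-- Backward value recursion: `Wval H Ptr R π k = V^π_{H+1-k}`, so `Wval H Ptr R π 0 = V^π_{H+1} = 0`. -/
noncomputable def Wval {S A : Type*} [Fintype S] [Fintype A] (H : ℕ)
    (Ptr : ℕ → S → A → S → ℝ) (R : ℕ → S → A → ℝ) (π : ℕ → S → A → ℝ) : ℕ → S → ℝ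
  | 0 => fun _ => 0
  | k + 1 => fun s => ∑ a : A, π (H - k) s a *
      (R (H - k) s a + ∑ s' : S, Ptr (H - k) s a s' * Wval H Ptr R π k s')

/-- State value function `V^π_h`. -/
noncomputable def Vval {S A : Type*} [Fintype S] [Fintype A] (H : ℕ)
    (Ptr : ℕ → S → A → S → ℝ) (R : ℕ → S → A → ℝ) (π : ℕ → S → A → ℝ) (h : ℕ) : S → ℝ :=
  Wval H Ptr R π (H + 1 - h)

/-- Action value function `Q^π_h(s,a) = R_h(s,a) + ∑_{s'} P_h(s'|s,a) V^π_{h+1}(s')`. -/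
noncomputable def Qval {S A : Type*} [Fintype S] [Fintype A] (H : ℕ)
    (Ptr : ℕ → S → A → S → ℝ) (R : ℕ → S → A → ℝ) (π : ℕ → S → A → ℝ)
    (h : ℕ) (s : S) (a : A) : ℝ :=
  R h s a + ∑ s' : S, Ptr h s a s' * Vval H Ptr R π (h + 1) s'

/-- Total value `V^π = ∑_s P0(s) V^π_1(s)`. -/
noncomputable def Vtot {S A : Type*} [Fintype S] [Fintype A] (H : ℕ) (P0 : S → ℝ)
    (Ptr : ℕ → S → A → S → ℝ) (R : ℕ → S → A → ℝ) (π : ℕ → S → A → ℝ) : ℝ :=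
  ∑ s : S, P0 s * Vval H Ptr R π 1 s


/-- Rewriting `docc` at index `h+1` for `h ≥ 1`. -/
lemma docc_succ_pdl {S A : Type*} [Fintype S] [Fintype A] (P0 : S → ℝ)
    (Ptr : ℕ → S → A → S → ℝ) (μ : ℕ → S → A → ℝ) {h : ℕ} (hh : 1 ≤ h) (s' : S) :
    docc P0 Ptr μ (h + 1) s' =
      ∑ s : S, ∑ a : A, docc P0 Ptr μ h s * μ h s a * Ptr h s a s' := by
  obtain ⟨m, rfl⟩ : ∃ m, h = m + 1 := ⟨h - 1, by omega⟩
  rfl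

/-- Bellman: `V^ν_h(s) = ∑_a ν_h(a|s) Q^ν_h(s,a)` for `1 ≤ h ≤ H`. -/
lemma Vval_eq_piQ_pdl {S A : Type*} [Fintype S] [Fintype A] (H : ℕ)
    (Ptr : ℕ → S → A → S → ℝ) (R : ℕ → S → A → ℝ) (ν : ℕ → S → A → ℝ)
    {h : ℕ} (h1 : 1 ≤ h) (h2 : h ≤ H) (s : S) :
    Vval H Ptr R ν h s = ∑ a : A, ν h s a * Qval H Ptr R ν h s a := by
  have e1 : H + 1 - h = (H - h) + 1 := by omega
  have e2 : H - (H - h) = h := by omega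
  have e3 : H + 1 - (h + 1) = H - h := by omega
  simp only [Vval, Qval, e1, e3, Wval, e2]

lemma Vval_top_pdl {S A : Type*} [Fintype S] [Fintype A] (H : ℕ)
    (Ptr : ℕ → S → A → S → ℝ) (R : ℕ → S → A → ℝ) (ν : ℕ → S → A → ℝ) (s : S) :
    Vval H Ptr R ν (H + 1) s = 0 := by
  simp [Vval, Nat.sub_self, Wval]

lemma pdl_flow {S A : Type*} [Fintype S] [Fintype A] (d : S → ℝ) (P : S → A → S → ℝ)
    (μ : S → A → ℝ) (V : S → ℝ) :
    ∑ s : S, d s * ∑ a : A, μ s a * ∑ s' : S, P s a s' * V s'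
      = ∑ s' : S, (∑ s : S, ∑ a : A, d s * μ s a * P s a s') * V s' := by
  calc ∑ s : S, d s * ∑ a : A, μ s a * ∑ s' : S, P s a s' * V s'
      = ∑ s : S, ∑ a : A, ∑ s' : S, d s * μ s a * P s a s' * V s' := by
        simp only [Finset.mul_sum]; ring_nf
    _ = ∑ s : S, ∑ s' : S, ∑ a : A, d s * μ s a * P s a s' * V s' :=
        Finset.sum_congr rfl fun s _ => Finset.sum_comm
    _ = ∑ s' : S, ∑ s : S, ∑ a : A, d s * μ s a * P s a s' * V s' :=
        Finset.sum_comm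
    _ = ∑ s' : S, (∑ s : S, ∑ a : A, d s * μ s a * P s a s') * V s' := by
        simp only [Finset.sum_mul]

/-- Key expansion: one-step pushforward of `Q`-values through the occupancy. -/
lemma key_expand_pdl {S A : Type*} [Fintype S] [Fintype A] (H : ℕ) (P0 : S → ℝ)
    (Ptr : ℕ → S → A → S → ℝ) (R : ℕ → S → A → ℝ) (μ ν : ℕ → S → A → ℝ)
    {h : ℕ} (h1 : 1 ≤ h) :
    ∑ s : S, docc P0 Ptr μ h s * ∑ a : A, μ h s a * Qval H Ptr R ν h s a =
      (∑ s : S, docc P0 Ptr μ h s * ∑ a : A, μ h s a * R h s a)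
      + ∑ s' : S, docc P0 Ptr μ (h + 1) s' * Vval H Ptr R ν (h + 1) s' := by
  simp only [Qval, mul_add, Finset.sum_add_distrib]
  congr 1
  rw [pdl_flow]
  exact Finset.sum_congr rfl fun s' _ => by rw [docc_succ_pdl P0 Ptr μ h1]

lemma tele_pdl (f : ℕ → ℝ) (H : ℕ) :
    ∑ h ∈ Finset.Icc 1 H, (f (h + 1) - f h) = f (H + 1) - f 1 := by
  induction H with
  | zero => simp
  | succ n ih =>
      rw [Finset.sum_Icc_succ_top (by omega), ih]
      ring

/-- Performance difference lemma (finite horizon):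
`V^{π'} − V^{π} = ∑_{h=1}^H ∑_s d^{π'}_h(s) ∑_a π'_h(a|s) (Q^π_h(s,a) − V^π_h(s))`. -/
theorem performance_difference_finite_horizon
    {S A : Type*} [Fintype S] [Fintype A] [Nonempty S] [Nonempty A]
    (H : ℕ) (hH : 1 ≤ H)
    (P0 : S → ℝ) (hP0 : ∀ s, 0 ≤ P0 s) (hP0sum : ∑ s : S, P0 s = 1)
    (Ptr : ℕ → S → A → S → ℝ)
    (hPtr0 : ∀ h ∈ Finset.Icc 1 H, ∀ s a s', 0 ≤ Ptr h s a s')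
    (hPtr1 : ∀ h ∈ Finset.Icc 1 H, ∀ s a, ∑ s' : S, Ptr h s a s' = 1)
    (R : ℕ → S → A → ℝ) (hR : ∀ h ∈ Finset.Icc 1 H, ∀ s a, R h s a ∈ Set.Icc (0 : ℝ) 1)
    (π π' : ℕ → S → A → ℝ)
    (hπ0 : ∀ h ∈ Finset.Icc 1 H, ∀ s a, 0 ≤ π h s a)
    (hπ1 : ∀ h ∈ Finset.Icc 1 H, ∀ s, ∑ a : A, π h s a = 1)
    (hπ'0 : ∀ h ∈ Finset.Icc 1 H, ∀ s a, 0 ≤ π' h s a)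
    (hπ'1 : ∀ h ∈ Finset.Icc 1 H, ∀ s, ∑ a : A, π' h s a = 1) :
    Vtot H P0 Ptr R π' - Vtot H P0 Ptr R π =
      ∑ h ∈ Finset.Icc 1 H, ∑ s : S, docc P0 Ptr π' h s *
        ∑ a : A, π' h s a * (Qval H Ptr R π h s a - Vval H Ptr R π h s) := by
  classical
  set g : ℕ → ℝ := fun k => ∑ s : S, docc P0 Ptr π' k s * Vval H Ptr R π k s with hg
  set g' : ℕ → ℝ := fun k => ∑ s : S, docc P0 Ptr π' k s * Vval H Ptr R π' k s with hg'
  set r : ℕ → ℝ := fun k => ∑ s : S, docc P0 Ptr π' k s * ∑ a : A, π' k s a * R k s a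
    with hr
  have gtop : g (H + 1) = 0 := by simp [hg, Vval_top_pdl]
  have g'top : g' (H + 1) = 0 := by simp [hg', Vval_top_pdl]
  have g1 : g 1 = Vtot H P0 Ptr R π := by
    simp only [hg, Vtot]; rfl
  have g'1 : g' 1 = Vtot H P0 Ptr R π' := by
    simp only [hg', Vtot]; rfl
  have hA : ∀ h ∈ Finset.Icc 1 H,
      (∑ s : S, docc P0 Ptr π' h s *
        ∑ a : A, π' h s a * (Qval H Ptr R π h s a - Vval H Ptr R π h s))
      = r h + (g (h + 1) - g h) := by
    intro h hh
    obtain ⟨h1, h2⟩ := Finset.mem_Icc.mp hh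
    have inner : ∀ s : S,
        ∑ a : A, π' h s a * (Qval H Ptr R π h s a - Vval H Ptr R π h s)
          = (∑ a : A, π' h s a * Qval H Ptr R π h s a) - Vval H Ptr R π h s := by
      intro s
      rw [Finset.sum_congr rfl (fun a _ => mul_sub (π' h s a) _ _),
        Finset.sum_sub_distrib, ← Finset.sum_mul, hπ'1 h hh s, one_mul]
    calc ∑ s : S, docc P0 Ptr π' h s *
            ∑ a : A, π' h s a * (Qval H Ptr R π h s a - Vval H Ptr R π h s)
        = ∑ s : S, (docc P0 Ptr π' h s * ∑ a : A, π' h s a * Qval H Ptr R π h s a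
            - docc P0 Ptr π' h s * Vval H Ptr R π h s) := by
          exact Finset.sum_congr rfl fun s _ => by rw [inner s, mul_sub]
      _ = (∑ s : S, docc P0 Ptr π' h s * ∑ a : A, π' h s a * Qval H Ptr R π h s a)
            - g h := by rw [Finset.sum_sub_distrib]
      _ = (r h + g (h + 1)) - g h := by
          rw [key_expand_pdl H P0 Ptr R π' π h1]
      _ = r h + (g (h + 1) - g h) := by ring
  have hB : ∀ h ∈ Finset.Icc 1 H, g' (h + 1) - g' h = -r h := by
    intro h hh
    obtain ⟨h1, h2⟩ := Finset.mem_Icc.mp hh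
    have : g' h = r h + g' (h + 1) := by
      calc g' h = ∑ s : S, docc P0 Ptr π' h s *
              ∑ a : A, π' h s a * Qval H Ptr R π' h s a :=
            Finset.sum_congr rfl fun s _ => by
              rw [Vval_eq_piQ_pdl H Ptr R π' h1 h2 s]
        _ = r h + g' (h + 1) := key_expand_pdl H P0 Ptr R π' π' h1
    linarith
  have sum_r : ∑ h ∈ Finset.Icc 1 H, r h = Vtot H P0 Ptr R π' := by
    have t := tele_pdl g' H
    rw [Finset.sum_congr rfl hB, Finset.sum_neg_distrib, g'top, g'1] at t
    linarith
  calc Vtot H P0 Ptr R π' - Vtot H P0 Ptr R π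
      = (∑ h ∈ Finset.Icc 1 H, r h) + (g (H + 1) - g 1) := by
        rw [sum_r, gtop, g1]; ring
    _ = ∑ h ∈ Finset.Icc 1 H, (r h + (g (h + 1) - g h)) := by
        rw [Finset.sum_add_distrib, tele_pdl g H]
    _ = ∑ h ∈ Finset.Icc 1 H, ∑ s : S, docc P0 Ptr π' h s *
          ∑ a : A, π' h s a * (Qval H Ptr R π h s a - Vval H Ptr R π h s) :=
        (Finset.sum_congr rfl hA).symm
end

section
/- Deterministic core of the FOOBAR guarantee (Theorem on FOOBAR). Let πf be any policy, let f_h : S × A → ℝ for h ∈ {1,…,H}, and let πb be a deterministic policy that is greedy with respect to f, i.e. f_h(s, πb_h(s)) = max_a f_h(s,a) for every h and s. Let μ̄_h be probability vectors on S for h ∈ {1,…,H}, and let ε_b, ε_f, C ≥ 0. Assume: (i) value-estimation error: for every h, ∑_s d^{πf}_h(s) · max_a (f_h(s,a) − Q^{πb}_h(s,a))² ≤ ε_b²; (ii) distribution matching: for every h, ∑_s (μ̄_h(s) − d^{πf}_h(s)) · (max_a Q^{πb}_h(s,a) − Q^{πb}_h(s, πb_h(s))) ≤ ε_f; (iii)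 coverage of a comparator policy πcomp: d^{πcomp}_h(s) ≤ C · μ̄_h(s) for every h and s. Then V^{πcomp} − V^{πb} ≤ C · H · (2·ε_b + ε_f). -/
open Finset

/-- The stochastic policy (point mass) induced by a deterministic policy `d : ℕ → S → A`. -/
noncomputable def detPol {S A : Type*} [DecidableEq A] (d : ℕ → S → A) : ℕ → S → A → ℝ :=
  fun h s a => if a = d h s then 1 else 0

/-- Maximum of a real-valued function over the finite nonempty type `A`. -/
noncomputable def maxA {A : Type*} [Fintype A] [Nonempty A] (g : A → ℝ) : ℝ :=
  Finset.univ.sup' Finset.univ_nonempty g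


section Helpers
variable {S A : Type*} [Fintype S] [Fintype A]

lemma docc_succ (P0 : S → ℝ) (Ptr : ℕ → S → A → S → ℝ) (π : ℕ → S → A → ℝ)
    {h : ℕ} (hh : 1 ≤ h) (s' : S) :
    docc P0 Ptr π (h + 1) s' =
      ∑ s : S, ∑ a : A, docc P0 Ptr π h s * π h s a * Ptr h s a s' := by
  obtain ⟨m, rfl⟩ : ∃ m, h = m + 1 := ⟨h - 1, by omega⟩
  rfl

lemma Vval_top (H : ℕ) (Ptr : ℕ → S → A → S → ℝ) (R : ℕ → S → A → ℝ)
    (π : ℕ → S → A → ℝ) (s : S) : Vval H Ptr R π (H + 1) s = 0 := by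
  unfold Vval
  rw [Nat.sub_self]
  rfl

lemma Vval_eq (H : ℕ) (Ptr : ℕ → S → A → S → ℝ) (R : ℕ → S → A → ℝ)
    (π : ℕ → S → A → ℝ) {h : ℕ} (h1 : 1 ≤ h) (h2 : h ≤ H) (s : S) :
    Vval H Ptr R π h s = ∑ a : A, π h s a * Qval H Ptr R π h s a := by
  simp only [Qval]
  unfold Vval
  have e1 : H + 1 - h = (H - h) + 1 := by omega
  have e3 : H + 1 - (h + 1) = H - h := by omega
  rw [e1, e3]
  show (∑ a : A, π (H - (H - h)) s a * _) = _
  rw [show H - (H - h) = h from by omega]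

lemma Vval_det [DecidableEq A] (H : ℕ) (Ptr : ℕ → S → A → S → ℝ) (R : ℕ → S → A → ℝ)
    (d : ℕ → S → A) {h : ℕ} (h1 : 1 ≤ h) (h2 : h ≤ H) (s : S) :
    Vval H Ptr R (detPol d) h s = Qval H Ptr R (detPol d) h s (d h s) := by
  rw [Vval_eq H Ptr R (detPol d) h1 h2]
  simp [detPol, ite_mul, Finset.sum_ite_eq']

lemma docc_nonneg (H : ℕ) (P0 : S → ℝ) (hP0 : ∀ s, 0 ≤ P0 s)
    (Ptr : ℕ → S → A → S → ℝ) (hPtr0 : ∀ h ∈ Finset.Icc 1 H, ∀ s a s', 0 ≤ Ptr h s a s')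
    (π : ℕ → S → A → ℝ) (hπ0 : ∀ h ∈ Finset.Icc 1 H, ∀ s a, 0 ≤ π h s a) :
    ∀ h, h ≤ H → ∀ s, 0 ≤ docc P0 Ptr π h s := by
  intro h
  induction h with
  | zero => exact fun _ s => hP0 s
  | succ n ih =>
    intro hn s
    rcases Nat.eq_zero_or_pos n with rfl | hpos
    · exact hP0 s
    · rw [docc_succ _ _ _ hpos]
      refine Finset.sum_nonneg fun s' _ => Finset.sum_nonneg fun a _ => ?_
      have hmem : n ∈ Finset.Icc 1 H := Finset.mem_Icc.mpr ⟨hpos, by omega⟩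
      exact mul_nonneg (mul_nonneg (ih (by omega) s') (hπ0 n hmem s' a)) (hPtr0 n hmem s' a s)

lemma docc_sum_one (H : ℕ) (P0 : S → ℝ) (hP0sum : ∑ s : S, P0 s = 1)
    (Ptr : ℕ → S → A → S → ℝ) (hPtr1 : ∀ h ∈ Finset.Icc 1 H, ∀ s a, ∑ s' : S, Ptr h s a s' = 1)
    (π : ℕ → S → A → ℝ) (hπ1 : ∀ h ∈ Finset.Icc 1 H, ∀ s, ∑ a : A, π h s a = 1) :
    ∀ h, h ≤ H → ∑ s : S, docc P0 Ptr π h s = 1 := by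
  intro h
  induction h with
  | zero => exact fun _ => hP0sum
  | succ n ih =>
    intro hn
    rcases Nat.eq_zero_or_pos n with rfl | hpos
    · exact hP0sum
    · have hmem : n ∈ Finset.Icc 1 H := Finset.mem_Icc.mpr ⟨hpos, by omega⟩
      calc ∑ s' : S, docc P0 Ptr π (n + 1) s'
          = ∑ s' : S, ∑ s : S, ∑ a : A, docc P0 Ptr π n s * π n s a * Ptr n s a s' :=
            Finset.sum_congr rfl fun s' _ => docc_succ _ _ _ hpos s'
        _ = ∑ s : S, ∑ a : A, docc P0 Ptr π n s * π n s a * ∑ s' : S, Ptr n s a s' := by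
            rw [Finset.sum_comm]
            refine Finset.sum_congr rfl fun s _ => ?_
            rw [Finset.sum_comm]
            exact Finset.sum_congr rfl fun a _ => (Finset.mul_sum _ _ _).symm
        _ = ∑ s : S, docc P0 Ptr π n s * ∑ a : A, π n s a := by
            refine Finset.sum_congr rfl fun s _ => ?_
            rw [Finset.mul_sum]
            exact Finset.sum_congr rfl fun a _ => by rw [hPtr1 n hmem s a, mul_one]
        _ = ∑ s : S, docc P0 Ptr π n s :=
            Finset.sum_congr rfl fun s _ => by rw [hπ1 n hmem s, mul_one]
        _ = 1 := ih (by omega)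

lemma Qval_sub (H : ℕ) (Ptr : ℕ → S → A → S → ℝ) (R : ℕ → S → A → ℝ)
    (π1 π2 : ℕ → S → A → ℝ) (h : ℕ) (s : S) (a : A) :
    Qval H Ptr R π1 h s a - Qval H Ptr R π2 h s a =
      ∑ s' : S, Ptr h s a s' * (Vval H Ptr R π1 (h + 1) s' - Vval H Ptr R π2 (h + 1) s') := by
  simp only [Qval, mul_sub, Finset.sum_sub_distrib]
  ring

end Helpers

lemma le_maxA {A : Type*} [Fintype A] [Nonempty A] (g : A → ℝ) (a : A) : g a ≤ maxA g :=
  Finset.le_sup' g (Finset.mem_univ a)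

lemma exists_maxA {A : Type*} [Fintype A] [Nonempty A] (g : A → ℝ) : ∃ a, maxA g = g a := by
  obtain ⟨a, -, ha⟩ := Finset.exists_mem_eq_sup' Finset.univ_nonempty g
  exact ⟨a, ha⟩

lemma crossterm_bound {S A : Type*} [Fintype S] [Fintype A] [Nonempty A]
    (Q F : S → A → ℝ) (b : S → A) (π : S → A → ℝ) (dcmp dfw mu : S → ℝ)
    (hπ0 : ∀ s a, 0 ≤ π s a) (hπ1 : ∀ s, ∑ a : A, π s a = 1)
    (hd0 : ∀ s, 0 ≤ dcmp s) (hdf0 : ∀ s, 0 ≤ dfw s) (hdf1 : ∑ s : S, dfw s = 1)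
    (hgr : ∀ s, F s (b s) = maxA (fun a => F s a))
    (εb εf C : ℝ) (hεb : 0 ≤ εb) (hC : 0 ≤ C)
    (hval : ∑ s : S, dfw s * maxA (fun a => (F s a - Q s a) ^ 2) ≤ εb ^ 2)
    (hmatch : ∑ s : S, (mu s - dfw s) * (maxA (fun a => Q s a) - Q s (b s)) ≤ εf)
    (hcov : ∀ s, dcmp s ≤ C * mu s) :
    ∑ s : S, dcmp s * ((∑ a : A, π s a * Q s a) - Q s (b s)) ≤ C * (2 * εb + εf) := by
  set gap : S → ℝ := fun s => maxA (fun a => Q s a) - Q s (b s) with hgapdef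
  have hgap0 : ∀ s, 0 ≤ gap s := fun s =>
    sub_nonneg.mpr (le_maxA (fun a => Q s a) (b s))
  set m : S → ℝ := fun s => Real.sqrt (maxA (fun a => (F s a - Q s a) ^ 2)) with hmdef
  have hmax0 : ∀ s, 0 ≤ maxA (fun a => (F s a - Q s a) ^ 2) := fun s =>
    le_trans (sq_nonneg (F s (Classical.arbitrary A) - Q s (Classical.arbitrary A))) (le_maxA (fun a => (F s a - Q s a) ^ 2) (Classical.arbitrary A))
  have hm0 : ∀ s, 0 ≤ m s := fun s => Real.sqrt_nonneg _
  have habs : ∀ s a, |F s a - Q s a| ≤ m s := by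
    intro s a
    rw [← Real.sqrt_sq_eq_abs]
    exact Real.sqrt_le_sqrt (le_maxA (fun a => (F s a - Q s a) ^ 2) a)
  have hgapm : ∀ s, gap s ≤ 2 * m s := by
    intro s
    obtain ⟨a0, ha0⟩ := exists_maxA (fun a => Q s a)
    have h1' := abs_le.mp (habs s a0)
    have h2' := abs_le.mp (habs s (b s))
    have h3' : F s a0 ≤ F s (b s) := by
      rw [hgr s]; exact le_maxA (fun a => F s a) a0
    have : gap s = Q s a0 - Q s (b s) := by rw [hgapdef]; simp only; rw [ha0]
    rw [this]; linarith [h1'.1, h1'.2, h2'.1, h2'.2]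
  have hCS : ∑ s : S, dfw s * m s ≤ εb := by
    have key := Finset.sum_mul_sq_le_sq_mul_sq Finset.univ
      (fun s : S => Real.sqrt (dfw s)) (fun s : S => Real.sqrt (dfw s) * m s)
    have e1 : ∀ s : S, Real.sqrt (dfw s) * (Real.sqrt (dfw s) * m s) = dfw s * m s := by
      intro s; rw [← mul_assoc, Real.mul_self_sqrt (hdf0 s)]
    have e2 : ∀ s : S, Real.sqrt (dfw s) ^ 2 = dfw s := fun s => Real.sq_sqrt (hdf0 s)
    have e3 : ∀ s : S, (Real.sqrt (dfw s) * m s) ^ 2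
        = dfw s * maxA (fun a => (F s a - Q s a) ^ 2) := by
      intro s
      rw [mul_pow, Real.sq_sqrt (hdf0 s), hmdef]
      simp only
      rw [Real.sq_sqrt (hmax0 s)]
    simp only [e1, e2, e3] at key
    rw [hdf1, one_mul] at key
    have key2 : (∑ s : S, dfw s * m s) ^ 2 ≤ εb ^ 2 := le_trans key hval
    have hX0 : 0 ≤ ∑ s : S, dfw s * m s :=
      Finset.sum_nonneg fun s _ => mul_nonneg (hdf0 s) (hm0 s)
    have := Real.sqrt_le_sqrt key2
    rwa [Real.sqrt_sq hX0, Real.sqrt_sq hεb] at this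
  have hdfgap : ∑ s : S, dfw s * gap s ≤ 2 * εb := by
    calc ∑ s : S, dfw s * gap s ≤ ∑ s : S, dfw s * (2 * m s) :=
          Finset.sum_le_sum fun s _ => mul_le_mul_of_nonneg_left (hgapm s) (hdf0 s)
      _ = 2 * ∑ s : S, dfw s * m s := by
          rw [Finset.mul_sum]; exact Finset.sum_congr rfl fun s _ => by ring
      _ ≤ 2 * εb := by linarith
  have hμgap : ∑ s : S, mu s * gap s ≤ 2 * εb + εf := by
    have hsub : ∑ s : S, mu s * gap s - ∑ s : S, dfw s * gap s ≤ εf := by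
      rw [← Finset.sum_sub_distrib]
      calc ∑ s : S, (mu s * gap s - dfw s * gap s)
          = ∑ s : S, (mu s - dfw s) * gap s := Finset.sum_congr rfl fun s _ => by ring
        _ ≤ εf := hmatch
    linarith
  have hsec1 : ∀ s, (∑ a : A, π s a * Q s a) ≤ maxA (fun a => Q s a) := by
    intro s
    calc ∑ a : A, π s a * Q s a ≤ ∑ a : A, π s a * maxA (fun a => Q s a) :=
        Finset.sum_le_sum fun a _ =>
          mul_le_mul_of_nonneg_left (le_maxA (fun a => Q s a) a) (hπ0 s a)
      _ = maxA (fun a => Q s a) := by rw [← Finset.sum_mul, hπ1 s, one_mul]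
  calc ∑ s : S, dcmp s * ((∑ a : A, π s a * Q s a) - Q s (b s))
      ≤ ∑ s : S, dcmp s * gap s :=
        Finset.sum_le_sum fun s _ =>
          mul_le_mul_of_nonneg_left (by have := hsec1 s; simp only [hgapdef]; linarith) (hd0 s)
    _ ≤ ∑ s : S, (C * mu s) * gap s :=
        Finset.sum_le_sum fun s _ => mul_le_mul_of_nonneg_right (hcov s) (hgap0 s)
    _ = C * ∑ s : S, mu s * gap s := by
        rw [Finset.mul_sum]; exact Finset.sum_congr rfl fun s _ => by ring
    _ ≤ C * (2 * εb + εf) := mul_le_mul_of_nonneg_left hμgap hC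

/-- Deterministic core of the FOOBAR guarantee: if `πb` is greedy with respect to the
estimated value functions `f`, the value-estimation error of `f` under the forward policy's
occupancy is at most `εb²`, the forward policy's occupancy matches the offline state
distributions `μ̄` up to `εf` against the induced greedy-gap discriminators, and `μ̄` covers a
comparator policy `πcomp` with constant `C`, then `V^{πcomp} − V^{πb} ≤ C·H·(2εb + εf)`. -/
theorem foobar_deterministic_core
    {S A : Type*} [Fintype S] [Fintype A] [Nonempty S] [Nonempty A] [DecidableEq A]
    (H : ℕ) (hH : 1 ≤ H)
    (P0 : S → ℝ) (hP0 : ∀ s, 0 ≤ P0 s) (hP0sum : ∑ s : S, P0 s = 1)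
    (Ptr : ℕ → S → A → S → ℝ)
    (hPtr0 : ∀ h ∈ Finset.Icc 1 H, ∀ s a s', 0 ≤ Ptr h s a s')
    (hPtr1 : ∀ h ∈ Finset.Icc 1 H, ∀ s a, ∑ s' : S, Ptr h s a s' = 1)
    (R : ℕ → S → A → ℝ) (hR : ∀ h ∈ Finset.Icc 1 H, ∀ s a, R h s a ∈ Set.Icc (0 : ℝ) 1)
    -- the forward policy `πf` and comparator policy `πcomp`
    (πf πcomp : ℕ → S → A → ℝ)
    (hπf0 : ∀ h ∈ Finset.Icc 1 H, ∀ s a, 0 ≤ πf h s a)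
    (hπf1 : ∀ h ∈ Finset.Icc 1 H, ∀ s, ∑ a : A, πf h s a = 1)
    (hπc0 : ∀ h ∈ Finset.Icc 1 H, ∀ s a, 0 ≤ πcomp h s a)
    (hπc1 : ∀ h ∈ Finset.Icc 1 H, ∀ s, ∑ a : A, πcomp h s a = 1)
    -- estimated value functions and the greedy deterministic backward policy
    (f : ℕ → S → A → ℝ) (πb : ℕ → S → A)
    (hgreedy : ∀ h ∈ Finset.Icc 1 H, ∀ s, f h s (πb h s) = maxA (fun a => f h s a))
    -- offline state distributions
    (μ : ℕ → S → ℝ)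
    (hμ0 : ∀ h ∈ Finset.Icc 1 H, ∀ s, 0 ≤ μ h s)
    (hμ1 : ∀ h ∈ Finset.Icc 1 H, ∑ s : S, μ h s = 1)
    (εb εf C : ℝ) (hεb : 0 ≤ εb) (hεf : 0 ≤ εf) (hC : 0 ≤ C)
    -- (i) value-estimation error
    (hval : ∀ h ∈ Finset.Icc 1 H,
      ∑ s : S, docc P0 Ptr πf h s *
        maxA (fun a => (f h s a - Qval H Ptr R (detPol πb) h s a) ^ 2) ≤ εb ^ 2)
    -- (ii) distribution matching
    (hmatch : ∀ h ∈ Finset.Icc 1 H,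
      ∑ s : S, (μ h s - docc P0 Ptr πf h s) *
        (maxA (fun a => Qval H Ptr R (detPol πb) h s a) -
          Qval H Ptr R (detPol πb) h s (πb h s)) ≤ εf)
    -- (iii) coverage of the comparator policy
    (hcov : ∀ h ∈ Finset.Icc 1 H, ∀ s, docc P0 Ptr πcomp h s ≤ C * μ h s) :
    Vtot H P0 Ptr R πcomp - Vtot H P0 Ptr R (detPol πb) ≤ C * H * (2 * εb + εf) := by
  have hdc0 : ∀ h, h ≤ H → ∀ s, 0 ≤ docc P0 Ptr πcomp h s :=
    docc_nonneg H P0 hP0 Ptr hPtr0 πcomp hπc0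
  have hdf0 : ∀ h, h ≤ H → ∀ s, 0 ≤ docc P0 Ptr πf h s :=
    docc_nonneg H P0 hP0 Ptr hPtr0 πf hπf0
  have hdf1 : ∀ h, h ≤ H → ∑ s : S, docc P0 Ptr πf h s = 1 :=
    docc_sum_one H P0 hP0sum Ptr hPtr1 πf hπf1
  have step : ∀ h, 1 ≤ h → h ≤ H →
      (∑ s : S, docc P0 Ptr πcomp h s *
        (Vval H Ptr R πcomp h s - Vval H Ptr R (detPol πb) h s)) ≤
      (∑ s : S, docc P0 Ptr πcomp (h + 1) s *
        (Vval H Ptr R πcomp (h + 1) s - Vval H Ptr R (detPol πb) (h + 1) s)) +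
      C * (2 * εb + εf) := by
    intro h h1 h2
    have hmem : h ∈ Finset.Icc 1 H := Finset.mem_Icc.mpr ⟨h1, h2⟩
    have hdec : (∑ s : S, docc P0 Ptr πcomp h s *
        (Vval H Ptr R πcomp h s - Vval H Ptr R (detPol πb) h s))
      = (∑ s : S, docc P0 Ptr πcomp h s *
          ∑ a : A, πcomp h s a * (Qval H Ptr R πcomp h s a - Qval H Ptr R (detPol πb) h s a))
        + ∑ s : S, docc P0 Ptr πcomp h s *
            ((∑ a : A, πcomp h s a * Qval H Ptr R (detPol πb) h s a) -
              Qval H Ptr R (detPol πb) h s (πb h s)) := by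
      rw [← Finset.sum_add_distrib]
      refine Finset.sum_congr rfl fun s _ => ?_
      rw [Vval_eq H Ptr R πcomp h1 h2 s, Vval_det H Ptr R πb h1 h2 s]
      have e : ∑ a : A, πcomp h s a * (Qval H Ptr R πcomp h s a - Qval H Ptr R (detPol πb) h s a)
          = (∑ a : A, πcomp h s a * Qval H Ptr R πcomp h s a)
            - ∑ a : A, πcomp h s a * Qval H Ptr R (detPol πb) h s a := by
        simp [mul_sub, Finset.sum_sub_distrib]
      rw [e]; ring
    have hfirst : (∑ s : S, docc P0 Ptr πcomp h s *
          ∑ a : A, πcomp h s a * (Qval H Ptr R πcomp h s a - Qval H Ptr R (detPol πb) h s a))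
        = ∑ s' : S, docc P0 Ptr πcomp (h + 1) s' *
            (Vval H Ptr R πcomp (h + 1) s' - Vval H Ptr R (detPol πb) (h + 1) s') := by
      calc (∑ s : S, docc P0 Ptr πcomp h s * ∑ a : A, πcomp h s a *
              (Qval H Ptr R πcomp h s a - Qval H Ptr R (detPol πb) h s a))
          = ∑ s : S, ∑ a : A, ∑ s' : S, docc P0 Ptr πcomp h s * πcomp h s a * Ptr h s a s' *
              (Vval H Ptr R πcomp (h + 1) s' - Vval H Ptr R (detPol πb) (h + 1) s') := by
            refine Finset.sum_congr rfl fun s _ => ?_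
            rw [Finset.mul_sum]
            refine Finset.sum_congr rfl fun a _ => ?_
            rw [Qval_sub H Ptr R πcomp (detPol πb) h s a, Finset.mul_sum, Finset.mul_sum]
            exact Finset.sum_congr rfl fun s' _ => by ring
        _ = ∑ s : S, ∑ s' : S, ∑ a : A, docc P0 Ptr πcomp h s * πcomp h s a * Ptr h s a s' *
              (Vval H Ptr R πcomp (h + 1) s' - Vval H Ptr R (detPol πb) (h + 1) s') :=
            Finset.sum_congr rfl fun s _ => Finset.sum_comm
        _ = ∑ s' : S, ∑ s : S, ∑ a : A, docc P0 Ptr πcomp h s * πcomp h s a * Ptr h s a s' *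
              (Vval H Ptr R πcomp (h + 1) s' - Vval H Ptr R (detPol πb) (h + 1) s') :=
            Finset.sum_comm
        _ = ∑ s' : S, docc P0 Ptr πcomp (h + 1) s' *
              (Vval H Ptr R πcomp (h + 1) s' - Vval H Ptr R (detPol πb) (h + 1) s') := by
            refine Finset.sum_congr rfl fun s' _ => ?_
            rw [docc_succ P0 Ptr πcomp h1 s', Finset.sum_mul]
            refine Finset.sum_congr rfl fun s _ => ?_
            rw [Finset.sum_mul]
    have hsecond := crossterm_bound (Qval H Ptr R (detPol πb) h) (f h) (πb h) (πcomp h)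
      (docc P0 Ptr πcomp h) (docc P0 Ptr πf h) (μ h)
      (hπc0 h hmem) (hπc1 h hmem) (hdc0 h h2) (hdf0 h h2) (hdf1 h h2)
      (hgreedy h hmem) εb εf C hεb hC (hval h hmem) (hmatch h hmem) (hcov h hmem)
    rw [hdec, hfirst]
    linarith
  have main : ∀ k : ℕ, k ≤ H →
      (∑ s : S, docc P0 Ptr πcomp (H + 1 - k) s *
        (Vval H Ptr R πcomp (H + 1 - k) s - Vval H Ptr R (detPol πb) (H + 1 - k) s))
        ≤ (k : ℝ) * (C * (2 * εb + εf)) := by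
    intro k
    induction k with
    | zero =>
      intro _
      have hz : ∀ s ∈ Finset.univ (α := S), docc P0 Ptr πcomp (H + 1 - 0) s *
          (Vval H Ptr R πcomp (H + 1 - 0) s - Vval H Ptr R (detPol πb) (H + 1 - 0) s) = 0 := by
        intro s _
        have e0 : H + 1 - 0 = H + 1 := rfl
        rw [e0, Vval_top, Vval_top]
        ring
      rw [Finset.sum_congr rfl hz]
      simp
    | succ n ih =>
      intro hn
      have e1 : H + 1 - (n + 1) = H - n := by omega
      have e2 : (H - n) + 1 = H + 1 - n := by omega
      have hstep := step (H - n) (by omega) (by omega)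
      rw [e2] at hstep
      rw [e1]
      have hih := ih (by omega)
      have hB0 : (0:ℝ) ≤ C * (2 * εb + εf) := mul_nonneg hC (by linarith)
      push_cast
      linarith
  have hfin := main H le_rfl
  rw [show H + 1 - H = 1 from by omega] at hfin
  have hV : Vtot H P0 Ptr R πcomp - Vtot H P0 Ptr R (detPol πb)
      = ∑ s : S, docc P0 Ptr πcomp 1 s *
          (Vval H Ptr R πcomp 1 s - Vval H Ptr R (detPol πb) 1 s) := by
    unfold Vtot
    rw [← Finset.sum_sub_distrib]
    refine Finset.sum_congr rfl fun s _ => ?_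
    have e : docc P0 Ptr πcomp 1 s = P0 s := rfl
    rw [e]; ring
  rw [hV]
  refine le_trans hfin (le_of_eq ?_)
  push_cast
  ring
end

section
/- Deterministic core of the forward (FAIL) guarantee. Let πf be a policy, let G_h (h ∈ {1,…,H}) be finite nonempty sets of functions S → ℝ (discriminator classes), let Π_h (h ∈ {1,…,H−1}) be nonempty sets of one-step policies, let μ_h : S × A → ℝ be nonnegative with ∑_{s,a} μ_h(s,a) = 1 for h ∈ {1,…,H}, with state marginals μ̄_h(s) = ∑_a μ_h(s,a), and let ε ≥ 0. Write step_h(ρ, p)(s') = ∑_{s,a} ρ(s) p(a|s) P_h(s'|s,a) for a probability vector ρ on S and one-step policy p (so d^{πf}_{h+1} = step_h(d^{πf}_h, πf_h)). Assume: (a) IPM_{G_1}(P0, μ̄_1) = 0; (b) consistency: for every h ∈ {1,…,H−1}, μ̄_{h+1}(s') = ∑_{s,a} μ_h(s,a) P_h(s'|s,a); (c) admissibility: for every h ∈ {1,…,H−1} there exists π^μ_h ∈ Π_h with μ_h(s,a) = μ̄_h(s) · π^μ_h(a|s) for all s, a; (d) exact completeness: for every h ∈ {1,…,H−1} and every g ∈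 G_{h+1} there exists f ∈ G_h with f(s) = ∑_{a,s'} π^μ_h(a|s) P_h(s'|s,a) g(s') for all s; (e) per-step guarantee: for every h ∈ {1,…,H−1} and every π' ∈ Π_h, IPM_{G_{h+1}}(step_h(d^{πf}_h, πf_h), μ̄_{h+1}) ≤ IPM_{G_{h+1}}(step_h(d^{πf}_h, π'), μ̄_{h+1}) + ε. Then for every h ∈ {1,…,H}, IPM_{G_h}(d^{πf}_h, μ̄_h) ≤ h·ε. -/
open Finset

/-- `IPM_G(P, Q) = max_{g ∈ G} |∑_s g(s) (P(s) − Q(s))|` for a finite class `G` of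
discriminators (expressed as a supremum, which is the maximum when `G` is nonempty). -/
noncomputable def IPM {S : Type*} [Fintype S] (G : Finset (S → ℝ)) (P Q : S → ℝ) : ℝ :=
  sSup ((fun g => |∑ s : S, g s * (P s - Q s)|) '' (G : Set (S → ℝ)))

/-- One-step forward map: `stepDist Ptr h ρ p (s') = ∑_{s,a} ρ(s) p(a|s) P_h(s'|s,a)`. -/
noncomputable def stepDist {S A : Type*} [Fintype S] [Fintype A]
    (Ptr : ℕ → S → A → S → ℝ) (h : ℕ) (ρ : S → ℝ) (p : S → A → ℝ) : S → ℝ :=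
  fun s' => ∑ s : S, ∑ a : A, ρ s * p s a * Ptr h s a s'

/-- State marginal of the offline state-action distribution: `μ̄_h(s) = ∑_a μ_h(s,a)`. -/
noncomputable def mubar {S A : Type*} [Fintype A] (μ : ℕ → S → A → ℝ) (h : ℕ) (s : S) : ℝ :=
  ∑ a : A, μ h s a

/-- Deterministic core of the forward (FAIL) guarantee: under exact admissibility of the
offline distribution `μ` with witnesses `πμ_h ∈ Π_h`, exact completeness of the discriminator
classes, consistency of the offline marginals, a zero-IPM initial condition, and an `ε`
per-step minmax guarantee for the forward policy, the forward occupancy `d^{πf}_h` is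
`h·ε`-close to `μ̄_h` in `IPM_{G_h}` for every `h ∈ {1,…,H}`. -/
theorem fail_deterministic_core
    {S A : Type*} [Fintype S] [Fintype A] [Nonempty S] [Nonempty A]
    (H : ℕ) (hH : 1 ≤ H)
    (P0 : S → ℝ) (hP0 : ∀ s, 0 ≤ P0 s) (hP0sum : ∑ s : S, P0 s = 1)
    (Ptr : ℕ → S → A → S → ℝ)
    (hPtr0 : ∀ h ∈ Finset.Icc 1 H, ∀ s a s', 0 ≤ Ptr h s a s')
    (hPtr1 : ∀ h ∈ Finset.Icc 1 H, ∀ s a, ∑ s' : S, Ptr h s a s' = 1)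
    -- the forward policy
    (πf : ℕ → S → A → ℝ)
    (hπf0 : ∀ h ∈ Finset.Icc 1 H, ∀ s a, 0 ≤ πf h s a)
    (hπf1 : ∀ h ∈ Finset.Icc 1 H, ∀ s, ∑ a : A, πf h s a = 1)
    -- discriminator classes
    (G : ℕ → Finset (S → ℝ)) (hG : ∀ h ∈ Finset.Icc 1 H, (G h).Nonempty)
    -- one-step policy classes
    (Pcls : ℕ → Set (S → A → ℝ))
    (hPcls : ∀ h ∈ Finset.Icc 1 (H - 1), (Pcls h).Nonempty)
    (hPclsStoch : ∀ h ∈ Finset.Icc 1 (H - 1), ∀ p ∈ Pcls h,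
      (∀ s a, 0 ≤ p s a) ∧ ∀ s, ∑ a : A, p s a = 1)
    -- offline state-action distributions
    (μ : ℕ → S → A → ℝ)
    (hμ0 : ∀ h ∈ Finset.Icc 1 H, ∀ s a, 0 ≤ μ h s a)
    (hμ1 : ∀ h ∈ Finset.Icc 1 H, ∑ s : S, ∑ a : A, μ h s a = 1)
    (ε : ℝ) (hε : 0 ≤ ε)
    -- (a) zero IPM at the initial step
    (ha : IPM (G 1) P0 (mubar μ 1) = 0)
    -- (b) consistency of the offline marginals
    (hb : ∀ h ∈ Finset.Icc 1 (H - 1), ∀ s',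
      mubar μ (h + 1) s' = ∑ s : S, ∑ a : A, μ h s a * Ptr h s a s')
    -- (c) admissibility with witnesses `πμ_h ∈ Π_h`
    (πμ : ℕ → S → A → ℝ)
    (hc : ∀ h ∈ Finset.Icc 1 (H - 1),
      πμ h ∈ Pcls h ∧ ∀ s a, μ h s a = mubar μ h s * πμ h s a)
    -- (d) exact completeness
    (hd : ∀ h ∈ Finset.Icc 1 (H - 1), ∀ g ∈ G (h + 1), ∃ f ∈ G h,
      ∀ s, f s = ∑ a : A, ∑ s' : S, πμ h s a * Ptr h s a s' * g s')
    -- (e) per-step minmax guarantee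
    (he : ∀ h ∈ Finset.Icc 1 (H - 1), ∀ p ∈ Pcls h,
      IPM (G (h + 1)) (stepDist Ptr h (docc P0 Ptr πf h) (πf h)) (mubar μ (h + 1)) ≤
        IPM (G (h + 1)) (stepDist Ptr h (docc P0 Ptr πf h) p) (mubar μ (h + 1)) + ε) :
    ∀ h ∈ Finset.Icc 1 H, IPM (G h) (docc P0 Ptr πf h) (mubar μ h) ≤ h * ε := by
  -- helper facts about IPM
  have hIPM_le : ∀ (Gh : Finset (S → ℝ)) (P Q : S → ℝ) (c : ℝ), Gh.Nonempty →
      (∀ g ∈ Gh, |∑ s : S, g s * (P s - Q s)| ≤ c) → IPM Gh P Q ≤ c := by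
    intro Gh P Q c hne hbd
    refine csSup_le ?_ ?_
    · obtain ⟨g, hg⟩ := hne
      exact ⟨_, Set.mem_image_of_mem _ hg⟩
    · rintro x ⟨g, hg, rfl⟩
      exact hbd g hg
  have hle_IPM : ∀ (Gh : Finset (S → ℝ)) (P Q : S → ℝ), ∀ g ∈ Gh,
      |∑ s : S, g s * (P s - Q s)| ≤ IPM Gh P Q := by
    intro Gh P Q g hg
    refine le_csSup ?_ (Set.mem_image_of_mem _ hg)
    exact (Gh.finite_toSet.image _).bddAbove
  intro h hh
  rw [Finset.mem_Icc] at hh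
  obtain ⟨h1, hhH⟩ := hh
  induction h, h1 using Nat.le_induction with
  | base =>
      have hd1 : docc P0 Ptr πf 1 = P0 := rfl
      rw [hd1, ha]
      simpa using hε
  | succ h h1 ih =>
      have hhH' : h ≤ H := le_trans (Nat.le_succ h) hhH
      have hmem : h ∈ Finset.Icc 1 (H - 1) := by
        rw [Finset.mem_Icc]
        exact ⟨h1, Nat.le_sub_one_of_lt hhH⟩
      obtain ⟨hπμmem, hπμadm⟩ := hc h hmem
      -- occupancy recursion
      have hdocc : docc P0 Ptr πf (h + 1) = stepDist Ptr h (docc P0 Ptr πf h) (πf h) := by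
        obtain ⟨k, rfl⟩ := Nat.exists_eq_add_of_le' h1
        rfl
      rw [hdocc]
      have step1 := he h hmem (πμ h) hπμmem
      -- bound the comparator term by the previous IPM
      have step2 : IPM (G (h + 1)) (stepDist Ptr h (docc P0 Ptr πf h) (πμ h)) (mubar μ (h + 1))
          ≤ IPM (G h) (docc P0 Ptr πf h) (mubar μ h) := by
        refine hIPM_le _ _ _ _ (hG (h + 1) (Finset.mem_Icc.mpr ⟨Nat.le_succ_of_le h1, hhH⟩)) ?_
        intro g hg
        obtain ⟨f, hf, hfs⟩ := hd h hmem g hg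
        have hmu' : ∀ s', mubar μ (h + 1) s' =
            ∑ s : S, ∑ a : A, mubar μ h s * πμ h s a * Ptr h s a s' := by
          intro s'
          rw [hb h hmem s']
          refine Finset.sum_congr rfl fun s _ => Finset.sum_congr rfl fun a _ => ?_
          rw [hπμadm s a]
        have key : ∑ s : S, g s * (stepDist Ptr h (docc P0 Ptr πf h) (πμ h) s - mubar μ (h + 1) s)
            = ∑ s : S, f s * (docc P0 Ptr πf h s - mubar μ h s) := by
          simp only [stepDist, hmu', hfs, ← Finset.sum_sub_distrib, Finset.mul_sum,
            Finset.sum_mul]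
          rw [Finset.sum_comm]
          refine Finset.sum_congr rfl fun s _ => ?_
          rw [Finset.sum_comm]
          refine Finset.sum_congr rfl fun a _ => Finset.sum_congr rfl fun x _ => ?_
          ring
        rw [key]
        exact hle_IPM _ _ _ f hf
      have : (h : ℝ) * ε + ε = ((h : ℝ) + 1) * ε := by ring
      calc IPM (G (h + 1)) (stepDist Ptr h (docc P0 Ptr πf h) (πf h)) (mubar μ (h + 1))
          ≤ IPM (G (h + 1)) (stepDist Ptr h (docc P0 Ptr πf h) (πμ h)) (mubar μ (h + 1)) + ε :=
            step1
        _ ≤ IPM (G h) (docc P0 Ptr πf h) (mubar μ h) + ε := by linarith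
        _ ≤ (h : ℝ) * ε + ε := by linarith [ih hhH']
        _ = ((h : ℝ) + 1) * ε := this
        _ = ((h + 1 : ℕ) : ℝ) * ε := by push_cast; ring
end
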